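/- arXiv:2208.03853 — 4 statements merged into one kernel-verified Lean document; each statement's English description precedes it below -/
import Mathlib

section
/- For a, b ∈ ℝ with a + b ≥ 1 and b ≥ 0, the function g(x) = |x|^b · (log(1+|x|))^a is locally Lipschitz continuous on ℝ, and if a + b > 0 then g(0) = 0. -/
/-!
Write `g = f ∘ |·|` with `f t = t ^ b * log (1 + t) ^ a`. On `(0, R]` we have
`t / (1 + R) ≤ log (1 + t) ≤ t`, so every product `t ^ p * log (1 + t) ^ q` with
`p + q = a + b - 1 ≥ 0` is bounded there. Both terms of `f'` have this shape, so `f` is Lipschitz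
on `(0, R]` by the mean value theorem; the same bound gives `f t = O(t)`, hence continuity at `0`
and the Lipschitz bound on the closure `[0, R]`.
-/

open Real Set Filter Topology

lemma zero_rpow_mul_zero_rpow {a b : ℝ} (h : a + b ≠ 0) :
    (0 : ℝ) ^ b * (0 : ℝ) ^ a = 0 := by
  rcases eq_or_ne b 0 with rfl | hb
  · simp [zero_rpow (by simpa using h : a ≠ 0)]
  · simp [zero_rpow hb]

lemma div_one_add_le_log_one_add {t : ℝ} (ht : 0 ≤ t) : t / (1 + t) ≤ log (1 + t) := by
  have h := one_sub_inv_le_log_of_pos (by linarith : (0 : ℝ) < 1 + t)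
  have h1t : (1 : ℝ) + t ≠ 0 := by positivity
  rwa [show 1 - (1 + t)⁻¹ = t / (1 + t) by field_simp; ring] at h

lemma log_one_add_rpow_le {t R q : ℝ} (ht : 0 < t) (htR : t ≤ R) :
    log (1 + t) ^ q ≤ t ^ q * (1 + R) ^ |q| := by
  have h1R : 1 ≤ 1 + R := by linarith
  have hlog : 0 < log (1 + t) := log_pos (by linarith)
  rcases le_or_gt 0 q with hq | hq
  · have hupper : log (1 + t) ≤ t := by
      linarith [log_le_sub_one_of_pos (by linarith : 0 < 1 + t)]
    calc log (1 + t) ^ q ≤ t ^ q := rpow_le_rpow hlog.le hupper hq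
      _ ≤ t ^ q * (1 + R) ^ |q| :=
        le_mul_of_one_le_right (by positivity) (one_le_rpow h1R (abs_nonneg q))
  · have hlower : t / (1 + R) ≤ log (1 + t) :=
      (div_le_div_of_nonneg_left ht.le (by linarith) (by linarith)).trans
        (div_one_add_le_log_one_add ht.le)
    calc log (1 + t) ^ q ≤ (t / (1 + R)) ^ q :=
          rpow_le_rpow_of_nonpos (div_pos ht (by linarith)) hlower hq.le
      _ = t ^ q * (1 + R) ^ |q| := by
        rw [abs_of_neg hq, rpow_neg (by linarith), div_rpow ht.le (by linarith), div_eq_mul_inv]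

lemma rpow_mul_log_one_add_rpow_le {t R p q s e : ℝ} (ht : 0 < t) (htR : t ≤ R)
    (hpq : p + q = s) (hs : 0 ≤ s) (he : |q| ≤ e) :
    t ^ p * log (1 + t) ^ q ≤ R ^ s * (1 + R) ^ e := by
  have hR : 0 ≤ R := ht.le.trans htR
  have h1R : 1 ≤ 1 + R := by linarith
  calc t ^ p * log (1 + t) ^ q ≤ t ^ p * (t ^ q * (1 + R) ^ |q|) := by
        gcongr; exact log_one_add_rpow_le ht htR
    _ = t ^ s * (1 + R) ^ |q| := by rw [← hpq, rpow_add ht]; ring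
    _ ≤ R ^ s * (1 + R) ^ e := by gcongr

section

variable {a b : ℝ}

lemma hasDerivAt_rpow_mul_log_one_add_rpow {t : ℝ} (ht : 0 < t) :
    HasDerivAt (fun s => s ^ b * log (1 + s) ^ a)
      (b * (t ^ (b - 1) * log (1 + t) ^ a) +
        a * (1 + t)⁻¹ * (t ^ b * log (1 + t) ^ (a - 1))) t := by
  have hlog : HasDerivAt (fun s => log (1 + s)) (1 + t)⁻¹ t := by
    simpa using ((hasDerivAt_id' t).const_add 1).log (by linarith)
  exact ((hasDerivAt_rpow_const (Or.inl ht.ne')).mul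
    (hlog.rpow_const (Or.inl (log_pos (by linarith)).ne'))).congr_deriv (by ring)

lemma abs_deriv_rpow_mul_log_one_add_rpow_le (hab : 1 ≤ a + b) {t R : ℝ} (ht : 0 < t)
    (htR : t ≤ R) :
    |b * (t ^ (b - 1) * log (1 + t) ^ a) + a * (1 + t)⁻¹ * (t ^ b * log (1 + t) ^ (a - 1))| ≤
      (|b| + |a|) * (R ^ (a + b - 1) * (1 + R) ^ (|a| + |a - 1|)) := by
  set C := R ^ (a + b - 1) * (1 + R) ^ (|a| + |a - 1|)
  have hC₁ : t ^ (b - 1) * log (1 + t) ^ a ≤ C :=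
    rpow_mul_log_one_add_rpow_le ht htR (by ring) (by linarith) (by linarith [abs_nonneg (a - 1)])
  have hC₂ : t ^ b * log (1 + t) ^ (a - 1) ≤ C :=
    rpow_mul_log_one_add_rpow_le ht htR (by ring) (by linarith) (by linarith [abs_nonneg a])
  have hinv : |(1 + t)⁻¹| ≤ 1 := by
    rw [abs_inv, abs_of_pos (by linarith)]; exact inv_le_one_of_one_le₀ (by linarith)
  have hlog : 0 ≤ log (1 + t) := log_nonneg (by linarith)
  calc _ ≤ |b| * (t ^ (b - 1) * log (1 + t) ^ a)
          + |a| * |(1 + t)⁻¹| * (t ^ b * log (1 + t) ^ (a - 1)) := by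
        refine (abs_add_le _ _).trans_eq ?_
        rw [abs_mul b, abs_mul (a * _), abs_mul a,
          abs_of_nonneg (by positivity : 0 ≤ t ^ (b - 1) * log (1 + t) ^ a),
          abs_of_nonneg (by positivity : 0 ≤ t ^ b * log (1 + t) ^ (a - 1))]
    _ ≤ |b| * C + |a| * 1 * C := by gcongr
    _ = (|b| + |a|) * C := by ring

lemma lipschitzOnWith_rpow_mul_log_one_add_rpow_Ioc (hab : 1 ≤ a + b) (R : ℝ) :
    LipschitzOnWith ((|b| + |a|) * (R ^ (a + b - 1) * (1 + R) ^ (|a| + |a - 1|))).toNNReal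
      (fun t => t ^ b * log (1 + t) ^ a) (Ioc 0 R) :=
  (convex_Ioc 0 R).lipschitzOnWith_of_nnnorm_hasDerivWithin_le
    (fun _ ht => (hasDerivAt_rpow_mul_log_one_add_rpow ht.1).hasDerivWithinAt)
    (fun _ ht => by
      rw [← NNReal.coe_le_coe, coe_nnnorm, norm_eq_abs]
      exact (abs_deriv_rpow_mul_log_one_add_rpow_le hab ht.1 ht.2).trans (le_coe_toNNReal _))

lemma continuousWithinAt_rpow_mul_log_one_add_rpow_zero (hab : 1 ≤ a + b) :
    ContinuousWithinAt (fun t => t ^ b * log (1 + t) ^ a) (Ici 0) 0 := by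
  have hbound : ∀ t ∈ Ioc (0 : ℝ) 1, t ^ b * log (1 + t) ^ a ≤ 2 ^ |a| * t := fun t ht => by
    have h := rpow_mul_log_one_add_rpow_le (p := b - 1) (q := a) (s := a + b - 1) ht.1 ht.2
      (by ring) (by linarith) le_rfl
    rw [one_rpow, one_mul, one_add_one_eq_two] at h
    calc t ^ b * log (1 + t) ^ a = t * (t ^ (b - 1) * log (1 + t) ^ a) := by
          rw [rpow_sub_one ht.1.ne', ← mul_assoc, mul_div_cancel₀ _ ht.1.ne']
      _ ≤ 2 ^ |a| * t := by nlinarith [ht.1]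
  rw [← continuousWithinAt_Ioi_iff_Ici, ContinuousWithinAt]
  simp only [add_zero, log_one, zero_rpow_mul_zero_rpow (by linarith : a + b ≠ 0)]
  have hlinear : Tendsto (fun t : ℝ => 2 ^ |a| * t) (𝓝[>] 0) (𝓝 0) := by
    simpa using ((continuous_const_mul ((2 : ℝ) ^ |a|)).tendsto 0).mono_left nhdsWithin_le_nhds
  have hIoc : ∀ᶠ t in 𝓝[>] (0 : ℝ), t ∈ Ioc 0 1 := Ioc_mem_nhdsGT one_pos
  refine tendsto_of_tendsto_of_tendsto_of_le_of_le' tendsto_const_nhds hlinear ?_ ?_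
  · filter_upwards [hIoc] with t ht
    exact mul_nonneg (rpow_nonneg ht.1.le b) (rpow_nonneg (log_nonneg (by linarith [ht.1])) a)
  · filter_upwards [hIoc] using hbound

lemma exists_lipschitzOnWith_rpow_mul_log_one_add_rpow_Icc (hab : 1 ≤ a + b) {R : ℝ}
    (hR : 0 < R) : ∃ L, LipschitzOnWith L (fun t => t ^ b * log (1 + t) ^ a) (Icc 0 R) := by
  have hcont : ContinuousOn (fun t => t ^ b * log (1 + t) ^ a) (Icc 0 R) := by
    rintro t ⟨ht, -⟩
    rcases ht.eq_or_lt with rfl | ht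
    · exact (continuousWithinAt_rpow_mul_log_one_add_rpow_zero hab).mono Icc_subset_Ici_self
    · exact (hasDerivAt_rpow_mul_log_one_add_rpow ht).continuousAt.continuousWithinAt
  rw [← closure_Ioc hR.ne] at hcont ⊢
  exact ⟨_, (lipschitzOnWith_rpow_mul_log_one_add_rpow_Ioc hab R).closure hcont⟩

end

theorem rpow_log_locallyLipschitz_general (a b : ℝ) (hab : 1 ≤ a + b) :
    (∀ K : Set ℝ, IsCompact K → ∃ L : NNReal,
      LipschitzOnWith L (fun x : ℝ => |x| ^ b * (Real.log (1 + |x|)) ^ a) K) ∧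
    (0 < a + b → |(0 : ℝ)| ^ b * (Real.log (1 + |(0 : ℝ)|)) ^ a = 0) := by
  refine ⟨fun K hK => ?_, fun h => by simpa using zero_rpow_mul_zero_rpow h.ne'⟩
  obtain ⟨R, hR, hKR⟩ := hK.isBounded.subset_closedBall_lt 0 0
  obtain ⟨L, hL⟩ := exists_lipschitzOnWith_rpow_mul_log_one_add_rpow_Icc hab hR
  have habs : MapsTo (fun x : ℝ => |x|) K (Icc 0 R) := fun x hx =>
    ⟨abs_nonneg x, by simpa using hKR hx⟩
  exact ⟨L * 1, hL.comp (lipschitzWith_one_norm (E := ℝ)).lipschitzOnWith habs⟩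

/-- For `a + b ≥ 1`, `b ≥ 0`, the function `g(x) = |x|^b (log(1+|x|))^a` is locally
Lipschitz on `ℝ`, and if moreover `a + b > 0` then `g 0 = 0`. -/
theorem rpow_log_locallyLipschitz (a b : ℝ) (hab : 1 ≤ a + b) (hb : 0 ≤ b) :
    (∀ K : Set ℝ, IsCompact K → ∃ L : NNReal,
      LipschitzOnWith L (fun x : ℝ => |x| ^ b * (Real.log (1 + |x|)) ^ a) K) ∧
    (0 < a + b → |(0 : ℝ)| ^ b * (Real.log (1 + |(0 : ℝ)|)) ^ a = 0) :=
  rpow_log_locallyLipschitz_general a b hab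
end

section
/- Let k : (0,∞) → [0,∞) be measurable, γ ≥ 0, and define h_n recursively by h₀ = 1, h_n(t) = ∫₀^t h_{n-1}(s) k(t-s) ds, and H(t;γ) = Σ_{n≥0} γⁿ h_n(t). If β > 0 satisfies γ ∫₀^∞ e^{-βt} k(t) dt < 1, then ∫₀^∞ e^{-βt} H(t;γ) dt = 1/(β(1 - γK(β))) < ∞, and consequently limsup_{t→∞} (1/t) log H(t;γ) ≤ β. -/
/-!
Multiplying by `e^{-βt}` and extending by zero to `t ≤ 0` turns the recursion for `h_n` into a
genuine convolution on `ℝ`: `a_{n+1} = a_n ⋆ κ` with `a_n = e^{-βt} h_n` and `κ = e^{-βt} k`,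
an integrable kernel of mass `K = K(β)`. Integrating a convolution multiplies the integrals, so
`∫ a_n = K^n / β`; convolving with `κ` multiplies the supremum by at most `K`, so
`0 ≤ a_n ≤ K^n`, i.e. `h_n(t) ≤ K^n e^{βt}`. Summing the geometric series in `γK < 1` gives the
Laplace transform of `H` and the bound `1 ≤ H(t) ≤ e^{βt} / (1 - γK)`, whence the growth rate.
-/

open MeasureTheory Filter Set Real
open ContinuousLinearMap (mul)
open scoped Convolution

noncomputable def laplaceIntegrand (β : ℝ) (f : ℝ → ℝ) : ℝ → ℝ :=
  (Ioi 0).indicator fun t => exp (-β * t) * f t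

theorem integral_laplaceIntegrand (β : ℝ) (f : ℝ → ℝ) :
    ∫ t, laplaceIntegrand β f t = ∫ t in Ioi 0, exp (-β * t) * f t :=
  integral_indicator measurableSet_Ioi

theorem integrable_laplaceIntegrand_iff {β : ℝ} {f : ℝ → ℝ} :
    Integrable (laplaceIntegrand β f) ↔ IntegrableOn (fun t => exp (-β * t) * f t) (Ioi 0) :=
  integrable_indicator_iff measurableSet_Ioi

theorem laplaceIntegrand_nonneg {β : ℝ} {f : ℝ → ℝ} (hf : ∀ t, 0 < t → 0 ≤ f t) :
    0 ≤ laplaceIntegrand β f :=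
  fun t => indicator_nonneg (fun t ht => mul_nonneg (exp_nonneg _) (hf t ht)) t

theorem eq_exp_mul_laplaceIntegrand (β : ℝ) (f : ℝ → ℝ) {t : ℝ} (ht : 0 < t) :
    f t = exp (β * t) * laplaceIntegrand β f t := by
  rw [laplaceIntegrand, indicator_of_mem (mem_Ioi.2 ht), ← mul_assoc, ← exp_add]
  simp

theorem laplaceIntegrand_tsum (β : ℝ) (c : ℕ → ℝ) (f : ℕ → ℝ → ℝ) (t : ℝ) :
    laplaceIntegrand β (fun t => ∑' n, c n * f n t) t
      = ∑' n, c n * laplaceIntegrand β (f n) t := by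
  by_cases ht : 0 < t
  · simp only [laplaceIntegrand, indicator_of_mem (mem_Ioi.2 ht), ← tsum_mul_left]
    congr 1 with n
    ring
  · simp [laplaceIntegrand, indicator_of_notMem (notMem_Ioi.2 (not_lt.1 ht))]

theorem convolution_indicator_Ioi (f g : ℝ → ℝ) (t : ℝ) :
    ((Ioi 0).indicator f ⋆[mul ℝ ℝ] (Ioi 0).indicator g) t
      = ∫ s in Ioc 0 t, f s * g (t - s) := by
  have hsupp : ∀ s, (Ioi 0).indicator f s * (Ioi 0).indicator g (t - s)
      = (Ioo 0 t).indicator (fun s => f s * g (t - s)) s := by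
    intro s
    by_cases hs : 0 < s <;> by_cases hst : s < t <;> simp [hs, hst]
  rw [convolution_mul, integral_Ioc_eq_integral_Ioo, ← integral_indicator measurableSet_Ioo]
  simp_rw [hsupp]

theorem laplaceIntegrand_convolution (β : ℝ) (f g : ℝ → ℝ) :
    laplaceIntegrand β (fun t => ∫ s in Ioc 0 t, f s * g (t - s))
      = laplaceIntegrand β f ⋆[mul ℝ ℝ] laplaceIntegrand β g := by
  ext t
  rw [laplaceIntegrand, laplaceIntegrand, laplaceIntegrand, convolution_indicator_Ioi]
  by_cases ht : 0 < t
  · rw [indicator_of_mem (mem_Ioi.2 ht), ← integral_const_mul]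
    congr 1 with s
    rw [show exp (-β * t) = exp (-β * s) * exp (-β * (t - s)) by rw [← exp_add]; ring_nf]
    ring
  · rw [indicator_of_notMem (notMem_Ioi.2 (not_lt.1 ht)), Ioc_eq_empty ht,
      Measure.restrict_empty, integral_zero_measure]

theorem convolution_mul_le {f g : ℝ → ℝ} {C : ℝ} (hf : 0 ≤ f) (hfC : ∀ s, f s ≤ C) (hg : 0 ≤ g)
    (hgi : Integrable g) (t : ℝ) : (f ⋆[mul ℝ ℝ] g) t ≤ C * ∫ s, g s := by
  rw [convolution_mul, ← integral_sub_left_eq_self g volume t, ← integral_const_mul]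
  exact integral_mono_of_nonneg (ae_of_all _ fun s => mul_nonneg (hf s) (hg _))
    ((hgi.comp_sub_left t).const_mul C)
    (ae_of_all _ fun s => mul_le_mul_of_nonneg_right (hfC s) (hg _))

section Iterates

variable {k : ℝ → ℝ} {h : ℕ → ℝ → ℝ} {β : ℝ}

theorem laplaceIntegrand_iterate_succ
    (hrec : ∀ n t, h (n + 1) t = ∫ s in Ioc 0 t, h n s * k (t - s)) (n : ℕ) :
    laplaceIntegrand β (h (n + 1)) = laplaceIntegrand β (h n) ⋆[mul ℝ ℝ] laplaceIntegrand β k := by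
  rw [funext (hrec n), laplaceIntegrand_convolution]

theorem integrable_laplaceIntegrand_iterate (hβ : 0 < β)
    (hk : IntegrableOn (fun t => exp (-β * t) * k t) (Ioi 0)) (h0 : ∀ t, h 0 t = 1)
    (hrec : ∀ n t, h (n + 1) t = ∫ s in Ioc 0 t, h n s * k (t - s)) (n : ℕ) :
    Integrable (laplaceIntegrand β (h n)) := by
  induction n with
  | zero =>
    rw [integrable_laplaceIntegrand_iff]
    simpa [h0] using exp_neg_integrableOn_Ioi 0 hβ
  | succ n ih =>
    rw [laplaceIntegrand_iterate_succ hrec]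
    exact ih.integrable_convolution _ (integrable_laplaceIntegrand_iff.2 hk)

theorem integral_laplaceIntegrand_iterate (hβ : 0 < β)
    (hk : IntegrableOn (fun t => exp (-β * t) * k t) (Ioi 0)) (h0 : ∀ t, h 0 t = 1)
    (hrec : ∀ n t, h (n + 1) t = ∫ s in Ioc 0 t, h n s * k (t - s)) (n : ℕ) :
    ∫ t, laplaceIntegrand β (h n) t = (∫ t in Ioi 0, exp (-β * t) * k t) ^ n / β := by
  induction n with
  | zero =>
    simp only [integral_laplaceIntegrand, h0, mul_one,
      integral_exp_mul_Ioi (neg_lt_zero.2 hβ), mul_zero, exp_zero]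
    ring
  | succ n ih =>
    rw [laplaceIntegrand_iterate_succ hrec, integral_convolution _
      (integrable_laplaceIntegrand_iterate hβ hk h0 hrec n)
      (integrable_laplaceIntegrand_iff.2 hk), ContinuousLinearMap.mul_apply', ih,
      ← integral_laplaceIntegrand]
    ring

theorem laplaceIntegrand_iterate_mem_Icc (hβ : 0 ≤ β) (hk_nonneg : ∀ t, 0 < t → 0 ≤ k t)
    (hk : IntegrableOn (fun t => exp (-β * t) * k t) (Ioi 0)) (h0 : ∀ t, h 0 t = 1)
    (hrec : ∀ n t, h (n + 1) t = ∫ s in Ioc 0 t, h n s * k (t - s)) (n : ℕ) (t : ℝ) :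
    laplaceIntegrand β (h n) t ∈ Icc 0 ((∫ t in Ioi 0, exp (-β * t) * k t) ^ n) := by
  induction n generalizing t with
  | zero =>
    refine ⟨laplaceIntegrand_nonneg (fun s _ => by simp [h0]) t, ?_⟩
    simp only [laplaceIntegrand, h0, mul_one, pow_zero]
    exact indicator_apply_le' (fun hs => exp_le_one_iff.2 (by nlinarith [mem_Ioi.1 hs]))
      fun _ => zero_le_one
  | succ n ih =>
    have hκ := laplaceIntegrand_nonneg (β := β) hk_nonneg
    rw [laplaceIntegrand_iterate_succ hrec]
    refine ⟨integral_nonneg fun s => mul_nonneg (ih s).1 (hκ _), ?_⟩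
    calc _ ≤ (∫ t in Ioi 0, exp (-β * t) * k t) ^ n * ∫ s, laplaceIntegrand β k s :=
          convolution_mul_le (fun s => (ih s).1) (fun s => (ih s).2) hκ
            (integrable_laplaceIntegrand_iff.2 hk) t
      _ = _ := by rw [integral_laplaceIntegrand, pow_succ]

end Iterates

theorem tsum_pow_mul_mem_Icc {h : ℕ → ℝ → ℝ} {β γ K t : ℝ} (hγ : 0 ≤ γ) (hγK0 : 0 ≤ γ * K)
    (hγK1 : γ * K < 1) (h0 : ∀ t, h 0 t = 1) (ha : ∀ n, laplaceIntegrand β (h n) t ∈ Icc 0 (K ^ n))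
    (ht : 0 < t) :
    ∑' n, γ ^ n * h n t ∈ Icc 1 ((1 - γ * K)⁻¹ * exp (β * t)) := by
  have hterm : ∀ n, γ ^ n * h n t ∈ Icc 0 ((γ * K) ^ n * exp (β * t)) := by
    intro n
    obtain ⟨ha0, haK⟩ := ha n
    rw [eq_exp_mul_laplaceIntegrand β (h n) ht, mul_pow]
    constructor
    · positivity
    · calc γ ^ n * (exp (β * t) * laplaceIntegrand β (h n) t)
          ≤ γ ^ n * (exp (β * t) * K ^ n) := by gcongr
        _ = γ ^ n * K ^ n * exp (β * t) := by ring
  have hgeom := (summable_geometric_of_lt_one hγK0 hγK1).mul_right (exp (β * t))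
  have hsum := hgeom.of_nonneg_of_le (fun n => (hterm n).1) (fun n => (hterm n).2)
  constructor
  · simpa [h0] using hsum.le_tsum 0 (fun n _ => (hterm n).1)
  · calc ∑' n, γ ^ n * h n t ≤ ∑' n, (γ * K) ^ n * exp (β * t) :=
          hsum.tsum_le_tsum (fun n => (hterm n).2) hgeom
      _ = _ := by rw [tsum_mul_right, tsum_geometric_of_lt_one hγK0 hγK1]

theorem integral_tsum_pow_mul_eq {a : ℕ → ℝ → ℝ} {β γ K : ℝ} (hγ : 0 ≤ γ) (hγK0 : 0 ≤ γ * K)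
    (hγK1 : γ * K < 1) (hint : ∀ n, Integrable (a n)) (hnn : ∀ n, 0 ≤ a n)
    (hval : ∀ n, ∫ t, a n t = K ^ n / β) :
    ∫ t, ∑' n, γ ^ n * a n t = 1 / (β * (1 - γ * K)) := by
  have hterm : ∀ n, ∫ t, γ ^ n * a n t = (γ * K) ^ n / β := fun n => by
    rw [integral_const_mul, hval, mul_pow, mul_div_assoc]
  have hnorm : ∀ n, ∫ t, ‖γ ^ n * a n t‖ = (γ * K) ^ n / β := fun n => by
    simp_rw [norm_of_nonneg (mul_nonneg (pow_nonneg hγ n) (hnn n _)), hterm]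
  rw [← integral_tsum_of_summable_integral_norm (fun n => (hint n).const_mul _)
    (by simpa only [hnorm] using (summable_geometric_of_lt_one hγK0 hγK1).div_const β)]
  simp_rw [hterm]
  rw [tsum_div_const, tsum_geometric_of_lt_one hγK0 hγK1]
  field_simp

theorem limsup_log_div_le_of_mem_Icc {f : ℝ → ℝ} {C β : ℝ} (hC : 0 < C)
    (hf : ∀ᶠ t in atTop, f t ∈ Icc 1 (C * exp (β * t))) :
    limsup (fun t => log (f t) / t) atTop ≤ β := by
  have hlim : Tendsto (fun t => log C / t + β) atTop (nhds β) := by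
    simpa using (tendsto_const_nhds.div_atTop tendsto_id).add_const β
  have hle : (fun t => log (f t) / t) ≤ᶠ[atTop] fun t => log C / t + β := by
    filter_upwards [hf, eventually_gt_atTop 0] with t ⟨hf1, hfC⟩ ht
    rw [div_add' _ _ _ ht.ne', div_le_div_iff_of_pos_right ht]
    calc log (f t) ≤ log (C * exp (β * t)) := log_le_log (by linarith) hfC
      _ = log C + β * t := by rw [log_mul hC.ne' (exp_pos _).ne', log_exp]
  have hco : IsCoboundedUnder (· ≤ ·) atTop fun t => log (f t) / t :=
    isCoboundedUnder_le_of_eventually_le atTop (x := 0) <| by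
      filter_upwards [hf, eventually_gt_atTop 0] with t hft ht
      exact div_nonneg (log_nonneg hft.1) ht.le
  exact (limsup_le_limsup hle hco hlim.isBoundedUnder_le).trans hlim.limsup_eq.le

theorem laplace_of_H_and_growth_general
    (k : ℝ → ℝ) (hk_nonneg : ∀ t, 0 < t → 0 ≤ k t)
    (γ : ℝ) (hγ : 0 ≤ γ)
    (h : ℕ → ℝ → ℝ)
    (h0 : ∀ t, h 0 t = 1)
    (hrec : ∀ n t, h (n + 1) t = ∫ s in Set.Ioc (0 : ℝ) t, h n s * k (t - s))
    (H : ℝ → ℝ) (hH : ∀ t, H t = ∑' n : ℕ, γ ^ n * h n t)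
    (β : ℝ) (hβ : 0 < β)
    (hK : IntegrableOn (fun t => Real.exp (-β * t) * k t) (Set.Ioi 0))
    (hsmall : γ * (∫ t in Set.Ioi (0 : ℝ), Real.exp (-β * t) * k t) < 1) :
    (∫ t in Set.Ioi (0 : ℝ), Real.exp (-β * t) * H t)
        = 1 / (β * (1 - γ * (∫ t in Set.Ioi (0 : ℝ), Real.exp (-β * t) * k t))) ∧
    limsup (fun t : ℝ => Real.log (H t) / t) atTop ≤ β := by
  set K := ∫ t in Ioi 0, exp (-β * t) * k t
  have hγK0 : 0 ≤ γ * K := mul_nonneg hγ <|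
    setIntegral_nonneg measurableSet_Ioi fun t ht => mul_nonneg (exp_nonneg _) (hk_nonneg t ht)
  have ha := laplaceIntegrand_iterate_mem_Icc hβ.le hk_nonneg hK h0 hrec
  have hLH : laplaceIntegrand β H = fun t => ∑' n, γ ^ n * laplaceIntegrand β (h n) t :=
    funext fun t => by rw [funext hH, laplaceIntegrand_tsum]
  constructor
  · rw [← integral_laplaceIntegrand β H, hLH]
    exact integral_tsum_pow_mul_eq hγ hγK0 hsmall
      (integrable_laplaceIntegrand_iterate hβ hK h0 hrec) (fun n t => (ha n t).1)
      (integral_laplaceIntegrand_iterate hβ hK h0 hrec)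
  · refine limsup_log_div_le_of_mem_Icc (inv_pos.2 (sub_pos.2 hsmall)) ?_
    filter_upwards [eventually_gt_atTop 0] with t ht
    rw [hH]
    exact tsum_pow_mul_mem_Icc hγ hγK0 hsmall h0 (fun n => ha n t) ht

/-- With `h_n` the iterated convolutions of `k` starting from `1` and
`H(t;γ) = Σ γⁿ h_n(t)`, if `γ K(β) < 1` for some `β > 0`, then
`∫₀^∞ e^{-βt} H(t;γ) dt = 1/(β(1-γK(β)))` and
`limsup_{t→∞} (1/t) log H(t;γ) ≤ β`. -/
theorem laplace_of_H_and_growth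
    (k : ℝ → ℝ) (hk_meas : Measurable k) (hk_nonneg : ∀ t, 0 < t → 0 ≤ k t)
    (γ : ℝ) (hγ : 0 ≤ γ)
    (h : ℕ → ℝ → ℝ)
    (h0 : ∀ t, h 0 t = 1)
    (hrec : ∀ n t, h (n + 1) t = ∫ s in Set.Ioc (0 : ℝ) t, h n s * k (t - s))
    (H : ℝ → ℝ) (hH : ∀ t, H t = ∑' n : ℕ, γ ^ n * h n t)
    (β : ℝ) (hβ : 0 < β)
    (hK : IntegrableOn (fun t => Real.exp (-β * t) * k t) (Set.Ioi 0))
    (hsmall : γ * (∫ t in Set.Ioi (0 : ℝ), Real.exp (-β * t) * k t) < 1) :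
    (∫ t in Set.Ioi (0 : ℝ), Real.exp (-β * t) * H t)
        = 1 / (β * (1 - γ * (∫ t in Set.Ioi (0 : ℝ), Real.exp (-β * t) * k t))) ∧
    limsup (fun t : ℝ => Real.log (H t) / t) atTop ≤ β :=
  laplace_of_H_and_growth_general k hk_nonneg γ hγ h h0 hrec H hH β hβ hK hsmall
end

section
/- Let σ : ℝ → ℝ be locally Lipschitz with σ(0)=0 and |σ(z)| = o(|z|(log|z|)^{α/2}) as |z|→∞ for some α ∈ (0,1). Define L_{σ_N} = sup_{z≠0} |σ_N(z)-σ_N(0)|/|z| where σ_N is the truncation of σ at level N. Then L_{σ_N} = o((log N)^{α/2}) as N → ∞. -/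
/-!
Split `[-N, N]` at a fixed radius `R`. On `[-R, R]` the Lipschitz constant `L` of `σ` bounds
`|σ w| / |w|`, and `L ≤ ε (log N) ^ (α / 2)` once `N` is large; for `R < |w| ≤ N` the growth
hypothesis gives `|σ w| / |w| ≤ ε (log |w|) ^ (α / 2) ≤ ε (log N) ^ (α / 2)`. Truncation at
level `N` only shrinks `|z|`, so `|σ_N z| / |z|` is bounded by these ratios.
-/

open Filter Real Set

lemma abs_min_one_div_abs_mul_le {N : ℝ} (hN : 0 ≤ N) (x : ℝ) :
    |min 1 (N / |x|) * x| ≤ |x| ∧ |min 1 (N / |x|) * x| ≤ N := by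
  have hc0 : 0 ≤ min 1 (N / |x|) := le_min zero_le_one (by positivity)
  rw [abs_mul, abs_of_nonneg hc0]
  refine ⟨mul_le_of_le_one_left (abs_nonneg x) (min_le_left _ _), ?_⟩
  rcases (abs_nonneg x).eq_or_lt with hx | hx
  · simp [← hx, hN]
  · calc min 1 (N / |x|) * |x| ≤ N / |x| * |x| := by gcongr; exact min_le_right _ _
      _ = N := div_mul_cancel₀ N hx.ne'

lemma iSup_abs_truncate_div_abs_le {σ : ℝ → ℝ} (h0 : σ 0 = 0) {N B : ℝ} (hN : 0 ≤ N)
    (hB : 0 ≤ B) (hσ : ∀ w, |w| ≤ N → |σ w| ≤ B * |w|) :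
    (⨆ z : {z : ℝ // z ≠ 0},
        |σ ((min 1 (N / |z.1|)) * z.1) - σ ((min 1 (N / |(0:ℝ)|)) * 0)| / |z.1|) ≤ B := by
  have : Nonempty {z : ℝ // z ≠ 0} := ⟨⟨1, one_ne_zero⟩⟩
  refine ciSup_le fun ⟨z, hz⟩ => ?_
  simp only [mul_zero, h0, sub_zero]
  rw [div_le_iff₀ (abs_pos.2 hz)]
  obtain ⟨hle_abs, hle_N⟩ := abs_min_one_div_abs_mul_le hN z
  calc |σ (min 1 (N / |z|) * z)| ≤ B * |min 1 (N / |z|) * z| := hσ _ hle_N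
    _ ≤ B * |z| := by gcongr

lemma LipschitzOnWith.abs_le_mul_abs {σ : ℝ → ℝ} {L : NNReal} {s : Set ℝ}
    (hL : LipschitzOnWith L σ s) (h0s : 0 ∈ s) (h0 : σ 0 = 0) {w : ℝ} (hw : w ∈ s) :
    |σ w| ≤ L * |w| := by
  simpa [Real.dist_eq, h0] using hL.dist_le_mul w hw 0 h0s

lemma eventually_le_mul_log_rpow {a ε : ℝ} (ha : 0 < a) (hε : 0 < ε) (L : ℝ) :
    ∀ᶠ N in atTop, L ≤ ε * log N ^ a :=
  (((tendsto_rpow_atTop ha).comp tendsto_log_atTop).const_mul_atTop hε).eventually_ge_atTop L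

lemma log_rpow_le_log_rpow {a x N : ℝ} (ha : 0 ≤ a) (hx : 1 ≤ x) (hxN : x ≤ N) :
    log x ^ a ≤ log N ^ a :=
  rpow_le_rpow (log_nonneg hx) (log_le_log (by linarith) hxN) ha

/-- If `σ` is locally Lipschitz, `σ(0)=0`, and `|σ(z)| = o(|z|(log|z|)^{α/2})` as
`|z|→∞`, then the growth rates `L_{σ_N}` of the truncations satisfy
`L_{σ_N} = o((log N)^{α/2})` as `N → ∞`. -/
theorem truncated_growth_rate_little_o_sigma
    (α : ℝ) (hα : α ∈ Set.Ioo (0 : ℝ) 1)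
    (σ : ℝ → ℝ)
    (hloc : ∀ K : Set ℝ, IsCompact K → ∃ L : NNReal, LipschitzOnWith L σ K)
    (h0 : σ 0 = 0)
    (hgrowth : ∀ ε : ℝ, 0 < ε → ∃ M : ℝ, ∀ z : ℝ, M ≤ |z| →
      |σ z| ≤ ε * (|z| * Real.log |z| ^ (α / 2))) :
    ∀ ε : ℝ, 0 < ε → ∃ M : ℝ, ∀ N : ℝ, M ≤ N →
      (⨆ z : {z : ℝ // z ≠ 0},
          |σ ((min 1 (N / |z.1|)) * z.1) - σ ((min 1 (N / |(0:ℝ)|)) * 0)| / |z.1|)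
        ≤ ε * Real.log N ^ (α / 2) := by
  intro ε hε
  have ha : 0 < α / 2 := half_pos hα.1
  obtain ⟨M₁, hM₁⟩ := hgrowth ε hε
  set R := max M₁ 1
  obtain ⟨L, hL⟩ := hloc (Icc (-R) R) isCompact_Icc
  obtain ⟨M, hM⟩ := eventually_atTop.mp
    ((eventually_le_mul_log_rpow ha hε L).and (eventually_ge_atTop R))
  refine ⟨M, fun N hN => ?_⟩
  obtain ⟨hLN, hRN⟩ := hM N hN
  have hR1 : 1 ≤ R := le_max_right _ _
  refine iSup_abs_truncate_div_abs_le h0 (by linarith) (L.coe_nonneg.trans hLN) fun w hwN => ?_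
  rcases le_or_gt |w| R with hwR | hwR
  · calc |σ w| ≤ L * |w| :=
          hL.abs_le_mul_abs ⟨by linarith, by linarith⟩ h0 (abs_le.mp hwR)
      _ ≤ ε * log N ^ (α / 2) * |w| := by gcongr
  · calc |σ w| ≤ ε * (|w| * log |w| ^ (α / 2)) := hM₁ w (le_max_left M₁ 1 |>.trans hwR.le)
      _ ≤ ε * (|w| * log N ^ (α / 2)) := by
          gcongr ε * (|w| * ?_)
          exact log_rpow_le_log_rpow ha.le (by linarith) hwN
      _ = ε * log N ^ (α / 2) * |w| := by ring
end

section
/- Let b : ℝ → ℝ be locally Lipschitz with b(0)=0 and |b(z)| = o(|z| log|z|) as |z|→∞. With b_N the truncation at level N and L_{b_N} = sup_{z≠0}|b_N(z)|/|z|, one has L_{b_N} = o(log N) as N → ∞. -/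
/-- If `b` is locally Lipschitz, `b(0)=0`, and `|b(z)| = o(|z| log|z|)` as `|z|→∞`,
then the growth rates `L_{b_N} = sup_{z≠0} |b_N(z)|/|z|` of the truncations satisfy
`L_{b_N} = o(log N)` as `N → ∞`. -/
theorem truncated_growth_rate_little_o_drift
    (b : ℝ → ℝ)
    (hloc : ∀ K : Set ℝ, IsCompact K → ∃ L : NNReal, LipschitzOnWith L b K)
    (h0 : b 0 = 0)
    (hgrowth : ∀ ε : ℝ, 0 < ε → ∃ M : ℝ, ∀ z : ℝ, M ≤ |z| →
      |b z| ≤ ε * (|z| * Real.log |z|)) :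
    ∀ ε : ℝ, 0 < ε → ∃ M : ℝ, ∀ N : ℝ, M ≤ N →
      (⨆ z : {z : ℝ // z ≠ 0},
          |b ((min 1 (N / |z.1|)) * z.1)| / |z.1|)
        ≤ ε * Real.log N := by
  intro ε hε
  obtain ⟨M₀, hM₀⟩ := hgrowth (ε / 2) (by linarith)
  set A : ℝ := max M₀ 1 with hA
  obtain ⟨L, hL⟩ := hloc (Set.Icc (-A) A) isCompact_Icc
  refine ⟨max A (Real.exp (2 * L / ε)), ?_⟩
  intro N hN
  have hA1 : (1 : ℝ) ≤ A := le_max_right _ _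
  have hN1 : (1 : ℝ) ≤ N := le_trans hA1 (le_trans (le_max_left _ _) hN)
  have hNpos : (0 : ℝ) < N := by linarith
  have hlogN : 2 * L / ε ≤ Real.log N := by
    rw [← Real.log_exp (2 * (L : ℝ) / ε)]
    exact Real.log_le_log (Real.exp_pos _) (le_trans (le_max_right _ _) hN)
  have hLle : (L : ℝ) ≤ ε / 2 * Real.log N := by
    rw [div_le_iff₀ hε] at hlogN; nlinarith
  have hlogN0 : 0 ≤ Real.log N := Real.log_nonneg hN1
  haveI : Nonempty {z : ℝ // z ≠ 0} := ⟨⟨1, one_ne_zero⟩⟩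
  apply ciSup_le
  rintro ⟨z, hz⟩
  have hzpos : 0 < |z| := abs_pos.mpr hz
  set c : ℝ := min 1 (N / |z|) with hc
  have hc0 : 0 ≤ c := le_min zero_le_one (div_nonneg hNpos.le hzpos.le)
  have hc1 : c ≤ 1 := min_le_left _ _
  set w : ℝ := c * z with hw
  have habsw : |w| = c * |z| := by
    rw [hw, abs_mul, abs_of_nonneg hc0]
  have hwz : |w| ≤ |z| := by
    rw [habsw]; nlinarith
  have hwN : |w| ≤ N := by
    rw [habsw]
    have : c ≤ N / |z| := min_le_right _ _
    rw [le_div_iff₀ hzpos] at this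
    linarith
  by_cases hcase : |w| ≤ A
  · -- Lipschitz case
    have hwmem : w ∈ Set.Icc (-A) A := abs_le.mp hcase
    have h0mem : (0 : ℝ) ∈ Set.Icc (-A) A := ⟨by linarith, by linarith⟩
    have hdist := hL.dist_le_mul w hwmem 0 h0mem
    rw [h0, dist_zero_right, dist_zero_right] at hdist
    have hbw : |b w| ≤ L * |z| :=
      le_trans hdist (mul_le_mul_of_nonneg_left hwz L.2)
    rw [div_le_iff₀ hzpos]
    calc |b w| ≤ L * |z| := hbw
      _ ≤ (ε / 2 * Real.log N) * |z| :=
        mul_le_mul_of_nonneg_right hLle hzpos.le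
      _ ≤ ε * Real.log N * |z| := by
        nlinarith [mul_nonneg hlogN0 hzpos.le]
  · -- growth case
    push_neg at hcase
    have hwA : A ≤ |w| := hcase.le
    have hw1 : (1 : ℝ) ≤ |w| := le_trans hA1 hwA
    have hbw := hM₀ w (le_trans (le_max_left _ _) hwA)
    have hlogw : Real.log |w| ≤ Real.log N :=
      Real.log_le_log (by linarith) hwN
    have hlogw0 : 0 ≤ Real.log |w| := Real.log_nonneg hw1
    rw [div_le_iff₀ hzpos]
    calc |b w| ≤ ε / 2 * (|w| * Real.log |w|) := hbw
      _ ≤ ε * Real.log N * |z| := by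
        nlinarith [mul_le_mul hwz hlogw hlogw0 hzpos.le, mul_nonneg hzpos.le hlogN0]
end
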